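/- arXiv:2107.05379 — 3 statements merged into one kernel-verified Lean document; each statement's English description precedes it below -/
import Mathlib

section
/- Let H₁, H₂ be bounded self-adjoint operators on a complex Hilbert space 𝔥, p₁, p₂ ≥ 0 with p₁ + p₂ = 1, H̄ = p₁H₁ + p₂H₂, and F(t) = p₁ e^{itH₁} + p₂ e^{itH₂}. Then for every u ∈ 𝔥 and T > 0, lim_{n→∞} sup_{t∈[0,T]} ‖e^{itH̄} u − (F(t/n))ⁿ u‖ = 0. -/
/-!
With `s = t/n`, the averaged group is `e^{itH̄} = A^n` for `A = e^{isH̄}`, and both `A` and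
`B = F s = p₁ e^{isH₁} + p₂ e^{isH₂}` are contractions, so `‖A^n - B^n‖ ≤ n ‖A - B‖`.
Since `p₁ + p₂ = 1`, the constant and first order terms of `A` and `B` agree, leaving
`‖A - B‖ = O(s²)`; hence `‖e^{itH̄} - F(t/n)^n‖ = O(t²/n)` uniformly for `t ∈ [0, T]`.
-/

open NormedSpace
open scoped Nat

theorem norm_exp_sub_one_sub_le (𝕂 : Type*) {𝔸 : Type*} [RCLike 𝕂] [NormedRing 𝔸]
    [NormedAlgebra 𝕂 𝔸] [CompleteSpace 𝔸] (x : 𝔸) :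
    ‖exp x - 1 - x‖ ≤ ‖x‖ ^ 2 * Real.exp ‖x‖ := by
  have hx : HasSum (fun n => ((n + 2)!⁻¹ : 𝕂) • x ^ (n + 2)) (exp x - 1 - x) := by
    simpa [Finset.sum_range_succ, sub_sub] using
      (hasSum_nat_add_iff' 2).mpr (exp_series_hasSum_exp' (𝕂 := 𝕂) x)
  have hr : HasSum (fun n => ‖x‖ ^ 2 * (‖x‖ ^ n / n !)) (‖x‖ ^ 2 * Real.exp ‖x‖) := by
    rw [Real.exp_eq_exp_ℝ]
    exact (expSeries_div_hasSum_exp ‖x‖).mul_left _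
  refine hx.norm_le_of_bounded hr fun n => ?_
  calc ‖((n + 2)!⁻¹ : 𝕂) • x ^ (n + 2)‖ ≤ ((n + 2)! : ℝ)⁻¹ * ‖x‖ ^ (n + 2) := by
        rw [norm_smul, norm_inv, RCLike.norm_natCast]
        gcongr
        exact norm_pow_le' x (by omega)
    _ ≤ (n ! : ℝ)⁻¹ * ‖x‖ ^ (n + 2) := by
        gcongr
        omega
    _ = ‖x‖ ^ 2 * (‖x‖ ^ n / n !) := by ring

theorem norm_mul_pow_le_of_norm_le_one {𝔸 : Type*} [SeminormedRing 𝔸] {b : 𝔸} (hb : ‖b‖ ≤ 1)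
    (x : 𝔸) (n : ℕ) : ‖x * b ^ n‖ ≤ ‖x‖ := by
  induction n with
  | zero => simp
  | succ n ih =>
    calc ‖x * b ^ (n + 1)‖ = ‖x * b ^ n * b‖ := by rw [pow_succ, mul_assoc]
      _ ≤ ‖x * b ^ n‖ * ‖b‖ := norm_mul_le _ _
      _ ≤ ‖x‖ * 1 := by gcongr
      _ = ‖x‖ := mul_one _

theorem norm_pow_sub_pow_le_of_norm_le_one {𝔸 : Type*} [SeminormedRing 𝔸] {a b : 𝔸}
    (ha : ‖a‖ ≤ 1) (hb : ‖b‖ ≤ 1) (n : ℕ) : ‖a ^ n - b ^ n‖ ≤ n * ‖a - b‖ := by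
  induction n with
  | zero => simp
  | succ n ih =>
    calc ‖a ^ (n + 1) - b ^ (n + 1)‖ = ‖a * (a ^ n - b ^ n) + (a - b) * b ^ n‖ := by
          rw [pow_succ', pow_succ']; noncomm_ring
      _ ≤ ‖a‖ * ‖a ^ n - b ^ n‖ + ‖a - b‖ :=
          (norm_add_le _ _).trans (add_le_add (norm_mul_le _ _)
            (norm_mul_pow_le_of_norm_le_one hb _ n))
      _ ≤ 1 * (n * ‖a - b‖) + ‖a - b‖ := by gcongr
      _ = (n + 1 : ℕ) * ‖a - b‖ := by push_cast; ring

theorem norm_ofReal_smul_add_ofReal_smul_le {𝕂 E : Type*} [RCLike 𝕂] [SeminormedAddCommGroup E]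
    [NormedSpace 𝕂 E] {p₁ p₂ : ℝ} (hp₁ : 0 ≤ p₁) (hp₂ : 0 ≤ p₂) (x y : E) :
    ‖(p₁ : 𝕂) • x + (p₂ : 𝕂) • y‖ ≤ p₁ * ‖x‖ + p₂ * ‖y‖ := by
  refine (norm_add_le _ _).trans_eq ?_
  rw [norm_smul, norm_smul, RCLike.norm_ofReal, RCLike.norm_ofReal, abs_of_nonneg hp₁,
    abs_of_nonneg hp₂]

theorem norm_le_one_of_mem_unitary {E : Type*} [NormedRing E] [StarRing E] [CStarRing E] {U : E}
    (hU : U ∈ unitary E) : ‖U‖ ≤ 1 := by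
  rcases subsingleton_or_nontrivial E with hE | hE
  · simp [Subsingleton.elim U 0]
  · exact (CStarRing.norm_of_mem_unitary hU).le

theorem norm_exp_I_smul_le_one {A : Type*} [CStarAlgebra A] {a : A} (ha : IsSelfAdjoint a) :
    ‖exp (Complex.I • a)‖ ≤ 1 :=
  norm_le_one_of_mem_unitary (selfAdjoint.expUnitary ⟨a, ha⟩).prop

theorem norm_exp_convexComb_sub_convexComb_exp_le (𝕂 : Type*) {𝔸 : Type*} [RCLike 𝕂]
    [NormedRing 𝔸] [NormedAlgebra 𝕂 𝔸] [CompleteSpace 𝔸] {p₁ p₂ : ℝ} (hp₁ : 0 ≤ p₁)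
    (hp₂ : 0 ≤ p₂) (hp : p₁ + p₂ = 1) {x₁ x₂ : 𝔸} {r : ℝ} (hx₁ : ‖x₁‖ ≤ r) (hx₂ : ‖x₂‖ ≤ r) :
    ‖exp ((p₁ : 𝕂) • x₁ + (p₂ : 𝕂) • x₂) - ((p₁ : 𝕂) • exp x₁ + (p₂ : 𝕂) • exp x₂)‖
      ≤ 2 * (r ^ 2 * Real.exp r) := by
  set R : 𝔸 → 𝔸 := fun x => exp x - 1 - x
  have hR : ∀ x : 𝔸, ‖x‖ ≤ r → ‖R x‖ ≤ r ^ 2 * Real.exp r := fun x hx =>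
    (norm_exp_sub_one_sub_le 𝕂 x).trans (by gcongr)
  have hmean : ‖(p₁ : 𝕂) • x₁ + (p₂ : 𝕂) • x₂‖ ≤ r :=
    calc _ ≤ p₁ * ‖x₁‖ + p₂ * ‖x₂‖ := norm_ofReal_smul_add_ofReal_smul_le hp₁ hp₂ x₁ x₂
      _ ≤ p₁ * r + p₂ * r := by gcongr
      _ = r := by rw [← add_mul, hp, one_mul]
  -- the constant and linear terms of the exponentials cancel because `p₁ + p₂ = 1`
  have hsplit : exp ((p₁ : 𝕂) • x₁ + (p₂ : 𝕂) • x₂) - ((p₁ : 𝕂) • exp x₁ + (p₂ : 𝕂) • exp x₂)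
      = R ((p₁ : 𝕂) • x₁ + (p₂ : 𝕂) • x₂) - ((p₁ : 𝕂) • R x₁ + (p₂ : 𝕂) • R x₂) := by
    have hp' : (p₂ : 𝕂) = 1 - p₁ := by rw [show p₂ = 1 - p₁ by linarith]; push_cast; rfl
    simp only [R, hp']
    module
  rw [hsplit]
  calc _ ≤ ‖R ((p₁ : 𝕂) • x₁ + (p₂ : 𝕂) • x₂)‖ + (p₁ * ‖R x₁‖ + p₂ * ‖R x₂‖) :=
        (norm_sub_le _ _).trans (by gcongr; exact norm_ofReal_smul_add_ofReal_smul_le hp₁ hp₂ _ _)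
    _ ≤ r ^ 2 * Real.exp r + (p₁ * (r ^ 2 * Real.exp r) + p₂ * (r ^ 2 * Real.exp r)) := by
        gcongr
        exacts [hR _ hmean, hR x₁ hx₁, hR x₂ hx₂]
    _ = 2 * (r ^ 2 * Real.exp r) := by linear_combination (r ^ 2 * Real.exp r) * hp

theorem norm_exp_I_smul_convexComb_sub_pow_le {A : Type*} [CStarAlgebra A] {a₁ a₂ : A}
    (ha₁ : IsSelfAdjoint a₁) (ha₂ : IsSelfAdjoint a₂) {M : ℝ} (hM₁ : ‖a₁‖ ≤ M) (hM₂ : ‖a₂‖ ≤ M)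
    {p₁ p₂ : ℝ} (hp₁ : 0 ≤ p₁) (hp₂ : 0 ≤ p₂) (hp : p₁ + p₂ = 1) {t : ℝ} (ht : 0 ≤ t)
    {n : ℕ} (hn : n ≠ 0) :
    ‖exp (Complex.I • (t : ℂ) • ((p₁ : ℂ) • a₁ + (p₂ : ℂ) • a₂))
        - ((p₁ : ℂ) • exp (Complex.I • ((t / n : ℝ) : ℂ) • a₁)
          + (p₂ : ℂ) • exp (Complex.I • ((t / n : ℝ) : ℂ) • a₂)) ^ n‖
      ≤ 2 * t ^ 2 * M ^ 2 * Real.exp (t * M) / n := by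
  let +nondep : NormedAlgebra ℚ A := .restrictScalars ℚ ℂ A
  set s : ℝ := t / n with hs_def
  have hn₁ : (1 : ℝ) ≤ n := by exact_mod_cast Nat.one_le_iff_ne_zero.mpr hn
  have hs : 0 ≤ s := by positivity
  have hst : s ≤ t := div_le_self ht hn₁
  set x₁ : A := Complex.I • (s : ℂ) • a₁
  set x₂ : A := Complex.I • (s : ℂ) • a₂
  have hreal : ∀ r : ℝ, IsSelfAdjoint (r : ℂ) := Complex.conj_ofReal
  have hx : ∀ a : A, ‖a‖ ≤ M → ‖Complex.I • (s : ℂ) • a‖ ≤ s * M := fun a ha => by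
    rw [norm_smul, norm_smul, Complex.norm_I, Complex.norm_real, Real.norm_of_nonneg hs, one_mul]
    gcongr
  have hnsmul : Complex.I • (t : ℂ) • ((p₁ : ℂ) • a₁ + (p₂ : ℂ) • a₂)
      = n • ((p₁ : ℂ) • x₁ + (p₂ : ℂ) • x₂) := by
    have ht' : (t : ℂ) = n * (s : ℂ) := by
      rw [hs_def]; push_cast; field_simp
    rw [← Nat.cast_smul_eq_nsmul ℂ, ht']
    module
  have hA : ‖exp ((p₁ : ℂ) • x₁ + (p₂ : ℂ) • x₂)‖ ≤ 1 := by
    have hsa : IsSelfAdjoint ((s : ℂ) • ((p₁ : ℂ) • a₁ + (p₂ : ℂ) • a₂)) :=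
      (hreal s).smul (((hreal p₁).smul ha₁).add ((hreal p₂).smul ha₂))
    convert norm_exp_I_smul_le_one hsa using 3
    module
  have hB : ‖(p₁ : ℂ) • exp x₁ + (p₂ : ℂ) • exp x₂‖ ≤ 1 :=
    calc _ ≤ p₁ * ‖exp x₁‖ + p₂ * ‖exp x₂‖ := norm_ofReal_smul_add_ofReal_smul_le hp₁ hp₂ _ _
      _ ≤ p₁ * 1 + p₂ * 1 := by
          gcongr
          exacts [norm_exp_I_smul_le_one ((hreal s).smul ha₁),
            norm_exp_I_smul_le_one ((hreal s).smul ha₂)]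
      _ = 1 := by rw [mul_one, mul_one, hp]
  rw [hnsmul, exp_nsmul]
  calc _ ≤ n * ‖exp ((p₁ : ℂ) • x₁ + (p₂ : ℂ) • x₂) - ((p₁ : ℂ) • exp x₁ + (p₂ : ℂ) • exp x₂)‖ :=
        norm_pow_sub_pow_le_of_norm_le_one hA hB n
    _ ≤ n * (2 * ((s * M) ^ 2 * Real.exp (s * M))) := by
        gcongr
        exact norm_exp_convexComb_sub_convexComb_exp_le ℂ hp₁ hp₂ hp (hx a₁ hM₁) (hx a₂ hM₂)
    _ = 2 * t ^ 2 * M ^ 2 * Real.exp (s * M) / n := by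
        rw [hs_def]; field_simp
    _ ≤ 2 * t ^ 2 * M ^ 2 * Real.exp (t * M) / n := by
        gcongr
        exact (norm_nonneg a₁).trans hM₁

/-- Chernoff equivalence of the averaged unitary group `e^{itH̄}`, `H̄ = p₁H₁ + p₂H₂`,
and the expectation `F t = p₁ e^{itH₁} + p₂ e^{itH₂}` of the random unitary group:
`(F (t/n))^n u → e^{itH̄} u` uniformly on `[0,T]`. -/
theorem chernoff_equivalence_two_valued_random_hamiltonian
    {𝓗 : Type*} [NormedAddCommGroup 𝓗] [InnerProductSpace ℂ 𝓗] [CompleteSpace 𝓗]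
    (H₁ H₂ : 𝓗 →L[ℂ] 𝓗) (hH₁ : IsSelfAdjoint H₁) (hH₂ : IsSelfAdjoint H₂)
    (p₁ p₂ : ℝ) (hp₁ : 0 ≤ p₁) (hp₂ : 0 ≤ p₂) (hp : p₁ + p₂ = 1)
    (F : ℝ → 𝓗 →L[ℂ] 𝓗)
    (hF : ∀ t : ℝ, F t
        = (p₁ : ℂ) • NormedSpace.exp (Complex.I • (t : ℂ) • H₁)
          + (p₂ : ℂ) • NormedSpace.exp (Complex.I • (t : ℂ) • H₂)) :
    ∀ u : 𝓗, ∀ T > (0 : ℝ), ∀ ε > (0 : ℝ), ∃ N : ℕ, ∀ n ≥ N,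
      ∀ t ∈ Set.Icc (0 : ℝ) T,
        ‖NormedSpace.exp (Complex.I • (t : ℂ) • ((p₁ : ℂ) • H₁ + (p₂ : ℂ) • H₂)) u
          - ((F (t / n)) ^ n) u‖ ≤ ε := by
  intro u T _ ε hε
  set M := max ‖H₁‖ ‖H₂‖
  set K := 2 * T ^ 2 * M ^ 2 * Real.exp (T * M) * ‖u‖
  obtain ⟨N, hN⟩ := exists_nat_gt (K / ε)
  refine ⟨N, fun n hn t ht => ?_⟩
  have hKn : K / ε < n := hN.trans_le (by exact_mod_cast hn)
  have hn : (0 : ℝ) < n := (by positivity : 0 ≤ K / ε).trans_lt hKn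
  have hop := norm_exp_I_smul_convexComb_sub_pow_le hH₁ hH₂ (le_max_left _ _)
    (le_max_right _ _) hp₁ hp₂ hp ht.1 (n := n) (by exact_mod_cast hn.ne')
  rw [hF, ← sub_apply]
  calc _ ≤ 2 * t ^ 2 * M ^ 2 * Real.exp (t * M) / n * ‖u‖ :=
        (ContinuousLinearMap.le_opNorm _ u).trans (by gcongr)
    _ ≤ K / n := by
        rw [div_mul_eq_mul_div]
        simp only [K]
        gcongr
        exacts [ht.1, ht.2, ht.2]
    _ ≤ ε := by
        rw [div_le_iff₀ hn]
        exact ((div_lt_iff₀ hε).mp hKn).le.trans_eq (mul_comm _ _)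
end

section
/- Let ξ be a real-valued random variable with E[ξ] = 0, E[ξ²] = σ², and E[|ξ|³] < ∞. Define F(t) on the space of bounded uniformly continuous functions with two bounded uniformly continuous derivatives by F(t)f(x) = E[f(x − √t·ξ)] for t ≥ 0. Then for every such f, lim_{t→0⁺} ‖(F(t)f − f)/t − (σ²/2) f''‖_∞ = 0, i.e. F'(0) = (σ²/2) d²/dx² on this space. -/
open MeasureTheory

/-!
Taylor's formula of order two, with the remainder controlled by the oscillation of `f''`, gives
`|f (x + h) - f x - h f' x - h² f'' x / 2| ≤ η h² + (2C/δ) |h|³`, where `|f''| ≤ C` and `η` bounds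
the oscillation of `f''` on intervals of length `δ`. Put `h = -√t ξ` and take expectations: the
linear term vanishes because `E ξ = 0`, the quadratic one is `t σ² f'' x / 2`, and the remainder
is at most `t (η σ² + (2C/δ) √t E|ξ|³)`, uniformly in `x`. Letting first `η` and then `t` go to
zero proves the claim.
-/

lemma abs_sub_le_of_hasDerivAt_of_abs_le {g g' : ℝ → ℝ} (hg : ∀ u, HasDerivAt g (g' u) u)
    {h C : ℝ} (hC : ∀ u, |u| ≤ |h| → |g' u| ≤ C) : |g h - g 0| ≤ C * |h| := by
  have key := (convex_Icc (-|h|) |h|).norm_image_sub_le_of_norm_hasDerivWithin_le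
    (fun u _ => (hg u).hasDerivWithinAt) (fun u hu => hC u (abs_le.mpr hu))
    ⟨neg_nonpos.mpr (abs_nonneg h), abs_nonneg h⟩ ⟨neg_abs_le h, le_abs_self h⟩
  simpa [Real.norm_eq_abs] using key

lemma abs_taylor_remainder_two_le_of_abs_sub_le {f : ℝ → ℝ} (hf : ContDiff ℝ 2 f) {x h K : ℝ}
    (hK : ∀ u, |u| ≤ |h| → |deriv (deriv f) (x + u) - deriv (deriv f) x| ≤ K) :
    |f (x + h) - f x - h * deriv f x - h ^ 2 / 2 * deriv (deriv f) x| ≤ K * h ^ 2 := by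
  have hf' : ContDiff ℝ 1 (deriv f) := (contDiff_succ_iff_deriv.mp hf).2.2
  have hdf : ∀ y, HasDerivAt f (deriv f y) y := fun y =>
    (hf.differentiable (by norm_num) y).hasDerivAt
  have hddf : ∀ y, HasDerivAt (deriv f) (deriv (deriv f) y) y := fun y =>
    (hf'.differentiable (by norm_num) y).hasDerivAt
  have hg' : ∀ u, HasDerivAt (fun u => deriv f (x + u) - deriv f x - u * deriv (deriv f) x)
      (deriv (deriv f) (x + u) - deriv (deriv f) x) u := fun u =>
    (((hddf (x + u)).comp_const_add x u).sub_const _).sub (hasDerivAt_mul_const _)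
  have hg : ∀ u, HasDerivAt
      (fun u => f (x + u) - f x - u * deriv f x - u ^ 2 / 2 * deriv (deriv f) x)
      (deriv f (x + u) - deriv f x - u * deriv (deriv f) x) u := fun u => by
    have hsq : HasDerivAt (fun u : ℝ => u ^ 2 / 2 * deriv (deriv f) x)
        (u * deriv (deriv f) x) u :=
      (((hasDerivAt_pow 2 u).div_const 2).mul_const _).congr_deriv (by norm_num)
    exact ((((hdf (x + u)).comp_const_add x u).sub_const _).sub (hasDerivAt_mul_const _)).sub hsq
  have hK0 : 0 ≤ K := by simpa using hK 0 (by simp)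
  have hg'_le :
      ∀ u, |u| ≤ |h| → |deriv f (x + u) - deriv f x - u * deriv (deriv f) x| ≤ K * |h| :=
    fun u hu => by
      have := abs_sub_le_of_hasDerivAt_of_abs_le hg' (fun v hv => hK v (hv.trans hu))
      simp only [add_zero, zero_mul, sub_zero, sub_self] at this
      exact this.trans (mul_le_mul_of_nonneg_left hu hK0)
  have := abs_sub_le_of_hasDerivAt_of_abs_le hg hg'_le
  simp only [add_zero, zero_mul, sub_zero, sub_self, ne_eq, OfNat.ofNat_ne_zero,
    not_false_eq_true, zero_pow, zero_div] at this
  rwa [mul_assoc, abs_mul_abs_self, ← sq] at this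

lemma abs_taylor_remainder_two_le {f : ℝ → ℝ} (hf : ContDiff ℝ 2 f) {C η δ : ℝ} (hδ : 0 < δ)
    (hC : ∀ y, |deriv (deriv f) y| ≤ C)
    (hη : ∀ x y, dist y x < δ → |deriv (deriv f) y - deriv (deriv f) x| ≤ η) (x h : ℝ) :
    |f (x + h) - f x - h * deriv f x - h ^ 2 / 2 * deriv (deriv f) x|
      ≤ η * h ^ 2 + 2 * C / δ * |h| ^ 3 := by
  have hC0 : 0 ≤ C := (abs_nonneg _).trans (hC 0)
  have hη0 : 0 ≤ η := by simpa using hη 0 0 (by simpa using hδ)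
  by_cases hh : |h| < δ
  · refine (abs_taylor_remainder_two_le_of_abs_sub_le hf fun u hu => hη _ _ ?_).trans
      (le_add_of_nonneg_right (by positivity))
    simpa [Real.dist_eq] using hu.trans_lt hh
  · have hosc : ∀ u, |u| ≤ |h| → |deriv (deriv f) (x + u) - deriv (deriv f) x| ≤ 2 * C :=
      fun u _ => (abs_sub _ _).trans (by linarith [hC (x + u), hC x])
    calc _ ≤ 2 * C * h ^ 2 := abs_taylor_remainder_two_le_of_abs_sub_le hf hosc
      _ = 2 * C / δ * (h ^ 2 * δ) := by field_simp
      _ ≤ 2 * C / δ * (h ^ 2 * |h|) := by gcongr; exact not_lt.mp hh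
      _ = 2 * C / δ * |h| ^ 3 := by rw [← sq_abs]; ring
      _ ≤ η * h ^ 2 + 2 * C / δ * |h| ^ 3 := le_add_of_nonneg_left (by positivity)

section Moments

variable {Ω : Type*} [MeasurableSpace Ω] {P : Measure Ω}

lemma integrable_abs_pow_of_le [IsFiniteMeasure P] {X : Ω → ℝ} (hX : AEStronglyMeasurable X P)
    {k n : ℕ} (hkn : k ≤ n) (hn : Integrable (fun ω => |X ω| ^ n) P) :
    Integrable (fun ω => |X ω| ^ k) P := by
  refine (hn.add (integrable_const 1)).mono' (hX.norm.pow k) (ae_of_all _ fun ω => ?_)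
  rw [Real.norm_eq_abs, abs_of_nonneg (by positivity), Pi.add_apply]
  rcases le_total |X ω| 1 with h | h
  · linarith [pow_le_one₀ (abs_nonneg (X ω)) h (n := k), pow_nonneg (abs_nonneg (X ω)) n]
  · linarith [pow_le_pow_right₀ h hkn]

lemma abs_integral_taylor_remainder_two_le [IsProbabilityMeasure P] {X : Ω → ℝ}
    (hX : Measurable X) (hX3 : Integrable (fun ω => |X ω| ^ 3) P) {f : ℝ → ℝ} (hf : Measurable f)
    {x A B a b : ℝ}
    (hR : ∀ h, |f (x + h) - f x - h * B - h ^ 2 / 2 * A| ≤ a * h ^ 2 + b * |h| ^ 3) :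
    |(∫ ω, f (x + X ω) ∂P) - f x - (∫ ω, X ω ∂P) * B - (∫ ω, X ω ^ 2 ∂P) / 2 * A|
      ≤ a * ∫ ω, X ω ^ 2 ∂P + b * ∫ ω, |X ω| ^ 3 ∂P := by
  have hX1 : Integrable X P := by
    refine (integrable_norm_iff hX.aestronglyMeasurable).mp ?_
    simpa using integrable_abs_pow_of_le hX.aestronglyMeasurable (by norm_num : 1 ≤ 3) hX3
  have hX2 : Integrable (fun ω => X ω ^ 2) P := by
    simpa using integrable_abs_pow_of_le hX.aestronglyMeasurable (by norm_num : 2 ≤ 3) hX3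
  have hpoly : Integrable (fun ω => X ω * B + X ω ^ 2 / 2 * A) P :=
    (hX1.mul_const B).add ((hX2.div_const 2).mul_const A)
  have hbound : Integrable (fun ω => a * X ω ^ 2 + b * |X ω| ^ 3) P :=
    (hX2.const_mul a).add (hX3.const_mul b)
  have hrem : Integrable (fun ω => f (x + X ω) - f x - X ω * B - X ω ^ 2 / 2 * A) P :=
    hbound.mono' (by fun_prop) (ae_of_all _ fun ω => hR (X ω))
  -- `f (x + X)` is a quadratic polynomial in `X` plus the dominated remainder.
  have hfX : Integrable (fun ω => f (x + X ω)) P :=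
    ((hrem.add hpoly).add (integrable_const (f x))).congr (ae_of_all _ fun ω => by simp)
  calc |(∫ ω, f (x + X ω) ∂P) - f x - (∫ ω, X ω ∂P) * B - (∫ ω, X ω ^ 2 ∂P) / 2 * A|
      = |∫ ω, f (x + X ω) - f x - X ω * B - X ω ^ 2 / 2 * A ∂P| := by
        have hfX₁ : Integrable (fun ω => f (x + X ω) - f x) P := hfX.sub (integrable_const _)
        have hfX₂ : Integrable (fun ω => f (x + X ω) - f x - X ω * B) P :=
          hfX₁.sub (hX1.mul_const B)
        rw [integral_sub hfX₂ ((hX2.div_const 2).mul_const A),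
          integral_sub hfX₁ (hX1.mul_const B), integral_sub hfX (integrable_const _),
          integral_mul_const, integral_mul_const, integral_div, integral_const, probReal_univ,
          one_smul]
    _ ≤ ∫ ω, |f (x + X ω) - f x - X ω * B - X ω ^ 2 / 2 * A| ∂P :=
        abs_integral_le_integral_abs
    _ ≤ ∫ ω, a * X ω ^ 2 + b * |X ω| ^ 3 ∂P := integral_mono hrem.abs hbound fun ω => hR (X ω)
    _ = a * ∫ ω, X ω ^ 2 ∂P + b * ∫ ω, |X ω| ^ 3 ∂P := by
        rw [integral_add (hX2.const_mul a) (hX3.const_mul b), integral_const_mul,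
          integral_const_mul]

lemma abs_integral_sub_sqrt_mul_div_sub_le [IsProbabilityMeasure P] {ξ : Ω → ℝ}
    (hξ : Measurable ξ) {σ : ℝ} (hmean : ∫ ω, ξ ω ∂P = 0) (hvar : ∫ ω, ξ ω ^ 2 ∂P = σ ^ 2)
    (hthird : Integrable (fun ω => |ξ ω| ^ 3) P) {f : ℝ → ℝ} (hf : Measurable f) {x A B a b : ℝ}
    (hR : ∀ h, |f (x + h) - f x - h * B - h ^ 2 / 2 * A| ≤ a * h ^ 2 + b * |h| ^ 3)
    {t : ℝ} (ht : 0 < t) :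
    |((∫ ω, f (x - √t * ξ ω) ∂P) - f x) / t - σ ^ 2 / 2 * A|
      ≤ a * σ ^ 2 + b * √t * ∫ ω, |ξ ω| ^ 3 ∂P := by
  have hs : √t ^ 2 = t := Real.sq_sqrt ht.le
  have habs : ∀ ω, |-(√t * ξ ω)| ^ 3 = t * √t * |ξ ω| ^ 3 := fun ω => by
    rw [abs_neg, abs_mul, abs_of_nonneg (Real.sqrt_nonneg t), mul_pow, pow_succ, hs]
  have key := abs_integral_taylor_remainder_two_le (P := P) (X := fun ω => -(√t * ξ ω))
    (hξ.const_mul _).neg (by simpa only [habs] using hthird.const_mul (t * √t)) hf hR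
  simp only [← sub_eq_add_neg, integral_neg, integral_const_mul, hmean, neg_sq, mul_pow, hs,
    hvar, habs] at key
  rw [div_sub' ht.ne', abs_div, abs_of_pos ht, div_le_iff₀ ht]
  calc _ = |(∫ ω, f (x - √t * ξ ω) ∂P) - f x - -(√t * 0) * B - t * σ ^ 2 / 2 * A| := by
        congr 1; ring
    _ ≤ a * (t * σ ^ 2) + b * (t * √t * ∫ ω, |ξ ω| ^ 3 ∂P) := key
    _ = _ := by ring

end Moments

theorem expected_shift_derivative_is_half_variance_laplacian_general
    {Ω : Type*} [MeasurableSpace Ω] (P : Measure Ω) [IsProbabilityMeasure P]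
    (ξ : Ω → ℝ) (hmeas : Measurable ξ) (σ : ℝ)
    (hmean : ∫ ω, ξ ω ∂P = 0)
    (hvar : ∫ ω, (ξ ω) ^ 2 ∂P = σ ^ 2)
    (hthird : Integrable (fun ω => |ξ ω| ^ 3) P)
    (f : ℝ → ℝ)
    (hfC2 : ContDiff ℝ 2 f)
    (hf''bd : ∃ C, ∀ x, |deriv (deriv f) x| ≤ C)
    (hf''u : UniformContinuous (deriv (deriv f))) :
    ∀ ε > (0 : ℝ), ∃ δ > (0 : ℝ), ∀ t : ℝ, 0 < t → t < δ → ∀ x : ℝ,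
      |((∫ ω, f (x - Real.sqrt t * ξ ω) ∂P) - f x) / t
        - σ ^ 2 / 2 * deriv (deriv f) x| ≤ ε := by
  intro ε hε
  obtain ⟨C, hC⟩ := hf''bd
  set M := ∫ ω, |ξ ω| ^ 3 ∂P
  have hM : 0 ≤ M := integral_nonneg fun ω => by positivity
  set η := ε / (2 * (σ ^ 2 + 1))
  obtain ⟨δ₀, hδ₀, hη⟩ := Metric.uniformContinuous_iff.mp hf''u η (by positivity)
  set c := 2 * C / δ₀
  have hc : 0 ≤ c := div_nonneg (by linarith [(abs_nonneg _).trans (hC 0)]) hδ₀.le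
  refine ⟨(ε / (2 * (c * M + 1))) ^ 2, by positivity, fun t ht htδ x => ?_⟩
  have hR := abs_taylor_remainder_two_le hfC2 hδ₀ hC (fun x y h => (hη h).le) x
  refine (abs_integral_sub_sqrt_mul_div_sub_le hmeas hmean hvar hthird
    hfC2.continuous.measurable hR ht).trans ?_
  have hησ : η * σ ^ 2 ≤ ε / 2 := by
    rw [div_mul_eq_mul_div, div_le_div_iff₀ (by positivity) (by positivity)]
    nlinarith [sq_nonneg σ]
  have hcM : c * √t * M ≤ ε / 2 := by
    have hst : √t < ε / (2 * (c * M + 1)) := (Real.sqrt_lt' (by positivity)).mpr htδ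
    calc c * √t * M = c * M * √t := by ring
      _ ≤ c * M * (ε / (2 * (c * M + 1))) := by gcongr
      _ ≤ ε / 2 := by
        rw [mul_div_assoc', div_le_div_iff₀ (by positivity) (by positivity)]
        nlinarith [mul_nonneg hc hM]
  linarith

/-- Central-limit realization of Chernoff's theorem: for a centered random variable `ξ`
with variance `σ²` and finite third absolute moment, the expected shift operator
`F t f x = E[f (x − √t ξ)]`, acting on bounded uniformly continuous functions with two
bounded uniformly continuous derivatives, satisfies
`(F t f − f)/t → (σ²/2) f''` in the sup norm as `t → 0⁺`. -/
theorem expected_shift_derivative_is_half_variance_laplacian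
    {Ω : Type*} [MeasurableSpace Ω] (P : Measure Ω) [IsProbabilityMeasure P]
    (ξ : Ω → ℝ) (hmeas : Measurable ξ) (σ : ℝ)
    (hmean : ∫ ω, ξ ω ∂P = 0)
    (hvar : ∫ ω, (ξ ω) ^ 2 ∂P = σ ^ 2)
    (hthird : Integrable (fun ω => |ξ ω| ^ 3) P)
    (f : ℝ → ℝ)
    (hfC2 : ContDiff ℝ 2 f)
    (hfbd : ∃ C, ∀ x, |f x| ≤ C) (hfu : UniformContinuous f)
    (hf'bd : ∃ C, ∀ x, |deriv f x| ≤ C) (hf'u : UniformContinuous (deriv f))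
    (hf''bd : ∃ C, ∀ x, |deriv (deriv f) x| ≤ C)
    (hf''u : UniformContinuous (deriv (deriv f))) :
    ∀ ε > (0 : ℝ), ∃ δ > (0 : ℝ), ∀ t : ℝ, 0 < t → t < δ → ∀ x : ℝ,
      |((∫ ω, f (x - Real.sqrt t * ξ ω) ∂P) - f x) / t
        - σ ^ 2 / 2 * deriv (deriv f) x| ≤ ε :=
  expected_shift_derivative_is_half_variance_laplacian_general P ξ hmeas σ hmean hvar hthird f hfC2
    hf''bd hf''u
end

section
/- Let A, B be bounded self-adjoint operators on a complex Hilbert space 𝔥. Then for every u ∈ 𝔥 and T > 0, lim_{n→∞} sup_{t∈[0,T]} ‖(e^{i(t/n)A} e^{i(t/n)B})ⁿ u − e^{it(A+B)} u‖ = 0. -/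
/-! With `s = t / n`, the operators `P = e^{isA} e^{isB}` and `Q = e^{is(A+B)}` are unitary, so
telescoping gives `‖Pⁿ - Qⁿ‖ ≤ n ‖P - Q‖`, while second-order Taylor expansion of the three
exponentials gives `‖P - Q‖ = O(s²)`. Hence the error is `O(t² / n)`, uniformly for `t ∈ [0, T]`. -/

open NormedSpace

section ExpBounds

variable {𝔸 : Type*} [NormedRing 𝔸] [NormOneClass 𝔸] [NormedAlgebra ℚ 𝔸] [CompleteSpace 𝔸]

theorem norm_exp_sub_sum_range_le (X : 𝔸) (k : ℕ) :
    ‖exp X - ∑ i ∈ Finset.range k, (i.factorial⁻¹ : ℚ) • X ^ i‖ ≤ ‖X‖ ^ k * Real.exp ‖X‖ := by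
  have hterm (n : ℕ) : ‖((n + k).factorial⁻¹ : ℚ) • X ^ (n + k)‖
      ≤ ‖X‖ ^ k * (‖X‖ ^ n / n.factorial) := by
    rw [norm_smul, ← Rat.norm_cast_real, Rat.cast_inv, Rat.cast_natCast, norm_inv,
      Real.norm_natCast]
    calc ((n + k).factorial : ℝ)⁻¹ * ‖X ^ (n + k)‖ ≤ (n.factorial : ℝ)⁻¹ * ‖X‖ ^ (n + k) := by
          gcongr
          · exact Nat.le_add_right n k
          · exact norm_pow_le X _
      _ = ‖X‖ ^ k * (‖X‖ ^ n / n.factorial) := by ring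
  rw [congrFun exp_eq_tsum_rat X, ← (expSeries_summable' (𝕂 := ℚ) X).sum_add_tsum_nat_add k,
    add_sub_cancel_left, Real.exp_eq_exp_ℝ, exp_eq_tsum_div, ← tsum_mul_left]
  exact tsum_of_norm_bounded ((Real.summable_pow_div_factorial _).mul_left _).hasSum hterm

theorem norm_exp_mul_exp_sub_exp_add_le (X Y : 𝔸) :
    ‖exp X * exp Y - exp (X + Y)‖ ≤ 2 * (‖X‖ + ‖Y‖) ^ 2 * Real.exp (‖X‖ + ‖Y‖) := by
  have hexp (Z : 𝔸) : ‖exp Z‖ ≤ Real.exp ‖Z‖ := by simpa using norm_exp_sub_sum_range_le Z 0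
  have hexp_sub_one (Z : 𝔸) : ‖exp Z - 1‖ ≤ ‖Z‖ * Real.exp ‖Z‖ := by
    simpa using norm_exp_sub_sum_range_le Z 1
  have hexp_sub_one_sub (Z : 𝔸) : ‖exp Z - 1 - Z‖ ≤ ‖Z‖ ^ 2 * Real.exp ‖Z‖ := by
    simpa [Finset.sum_range_succ, sub_sub] using norm_exp_sub_sum_range_le Z 2
  set a := ‖X‖
  set b := ‖Y‖
  have ha : 0 ≤ a := norm_nonneg X
  have hb : 0 ≤ b := norm_nonneg Y
  have hXY : ‖X + Y‖ ≤ a + b := norm_add_le X Y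
  have hexp_b : Real.exp b ≤ Real.exp (a + b) := Real.exp_le_exp.2 (by linarith)
  calc ‖exp X * exp Y - exp (X + Y)‖
      = ‖(exp X - 1 - X) * exp Y + X * (exp Y - 1) + (exp Y - 1 - Y)
          - (exp (X + Y) - 1 - (X + Y))‖ := by congr 1; noncomm_ring
    _ ≤ ‖exp X - 1 - X‖ * ‖exp Y‖ + a * ‖exp Y - 1‖ + ‖exp Y - 1 - Y‖
          + ‖exp (X + Y) - 1 - (X + Y)‖ := by
        refine (norm_sub_le _ _).trans (add_le_add_left ((norm_add₃_le ..).trans ?_) _)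
        gcongr <;> exact norm_mul_le _ _
    _ ≤ a ^ 2 * Real.exp a * Real.exp b + a * (b * Real.exp b) + b ^ 2 * Real.exp b
          + (a + b) ^ 2 * Real.exp (a + b) := by
        gcongr
        · exact hexp_sub_one_sub X
        · exact hexp Y
        · exact hexp_sub_one Y
        · exact hexp_sub_one_sub Y
        · exact (hexp_sub_one_sub _).trans (by gcongr)
    _ ≤ (a ^ 2 + a * b + b ^ 2 + (a + b) ^ 2) * Real.exp (a + b) := by
        rw [mul_assoc, ← Real.exp_add]
        nlinarith [mul_le_mul_of_nonneg_left hexp_b (mul_nonneg ha hb),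
          mul_le_mul_of_nonneg_left hexp_b (sq_nonneg b)]
    _ ≤ 2 * (a + b) ^ 2 * Real.exp (a + b) := by
        gcongr
        nlinarith [mul_nonneg ha hb]

end ExpBounds

section CStarAlgebra

variable {E : Type*} [NormedRing E] [StarRing E] [CStarRing E]

theorem norm_pow_sub_pow_le_of_mem_unitary {U V : E} (hU : U ∈ unitary E)
    (hV : V ∈ unitary E) (n : ℕ) : ‖U ^ n - V ^ n‖ ≤ n * ‖U - V‖ := by
  induction n with
  | zero => simp
  | succ n ih =>
    calc ‖U ^ (n + 1) - V ^ (n + 1)‖ = ‖U * (U ^ n - V ^ n) + (U - V) * V ^ n‖ := by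
          rw [pow_succ', pow_succ']; noncomm_ring
      _ ≤ ‖U ^ n - V ^ n‖ + ‖U - V‖ := by
          rw [← CStarRing.norm_mem_unitary_mul (U ^ n - V ^ n) hU,
            ← CStarRing.norm_mul_mem_unitary (U - V) (pow_mem hV n)]
          exact norm_add_le _ _
      _ ≤ (n + 1 : ℕ) * ‖U - V‖ := by push_cast; linarith

variable [NormedAlgebra ℂ E] [StarModule ℂ E] [CompleteSpace E]

theorem exp_I_smul_mem_unitary {a : E} (ha : IsSelfAdjoint a) :
    exp (Complex.I • a) ∈ unitary E :=
  -- the algebraic laws of `NormedSpace.exp` are stated for normed `ℚ`-algebras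
  letI : NormedAlgebra ℚ E := .restrictScalars ℚ ℂ E
  exp_mem_unitary_of_mem_skewAdjoint (ha.smul_mem_skewAdjoint Complex.conj_I)

theorem norm_exp_mul_exp_pow_sub_exp_add_le {a b : E} (ha : IsSelfAdjoint a)
    (hb : IsSelfAdjoint b) (t : ℝ) {n : ℕ} (hn : n ≠ 0) :
    ‖(exp (Complex.I • ((t / n : ℝ) : ℂ) • a) * exp (Complex.I • ((t / n : ℝ) : ℂ) • b)) ^ n
        - exp (Complex.I • (t : ℂ) • (a + b))‖
      ≤ 2 * (|t| * (‖a‖ + ‖b‖)) ^ 2 * Real.exp (|t| * (‖a‖ + ‖b‖)) / n := by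
  -- a C⋆-ring is a `NormOneClass` only when it is nontrivial
  rcases subsingleton_or_nontrivial E with _ | _
  · rw [Subsingleton.elim (_ - _) (0 : E), norm_zero]
    positivity
  let : NormedAlgebra ℚ E := .restrictScalars ℚ ℂ E
  set s : ℝ := t / n
  have hunitary {c : E} (hc : IsSelfAdjoint c) : exp (Complex.I • (s : ℂ) • c) ∈ unitary E :=
    exp_I_smul_mem_unitary (.smul (Complex.conj_ofReal s) hc)
  have hnorm (c : E) : ‖Complex.I • (s : ℂ) • c‖ = |t| / n * ‖c‖ := by
    rw [norm_smul, norm_smul, Complex.norm_I, Complex.norm_real, Real.norm_eq_abs, abs_div,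
      Nat.abs_cast, one_mul]
  have hpow : exp (Complex.I • (t : ℂ) • (a + b)) = exp (Complex.I • (s : ℂ) • (a + b)) ^ n := by
    rw [← exp_nsmul, ← Nat.cast_smul_eq_nsmul ℂ, smul_smul, smul_smul, smul_smul]
    congr 2
    push_cast [s]
    field_simp
  calc _ ≤ n * ‖exp (Complex.I • (s : ℂ) • a) * exp (Complex.I • (s : ℂ) • b)
          - exp (Complex.I • (s : ℂ) • a + Complex.I • (s : ℂ) • b)‖ := by
        rw [hpow, ← smul_add, ← smul_add]
        exact norm_pow_sub_pow_le_of_mem_unitary (mul_mem (hunitary ha) (hunitary hb))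
          (hunitary (ha.add hb)) n
    _ ≤ n * (2 * (|t| / n * (‖a‖ + ‖b‖)) ^ 2 * Real.exp (|t| * (‖a‖ + ‖b‖))) := by
        gcongr
        refine (norm_exp_mul_exp_sub_exp_add_le _ _).trans ?_
        rw [hnorm, hnorm, ← mul_add]
        gcongr
        exact div_le_self (abs_nonneg t) (by exact_mod_cast Nat.one_le_iff_ne_zero.2 hn)
    _ = _ := by field_simp

end CStarAlgebra

/-- The Trotter product formula for bounded self-adjoint operators:
`(e^{i(t/n)A} e^{i(t/n)B})ⁿ u → e^{it(A+B)} u` uniformly in `t ∈ [0,T]`. -/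
theorem trotter_product_formula_bounded_selfAdjoint
    {𝓗 : Type*} [NormedAddCommGroup 𝓗] [InnerProductSpace ℂ 𝓗] [CompleteSpace 𝓗]
    (A B : 𝓗 →L[ℂ] 𝓗) (hA : IsSelfAdjoint A) (hB : IsSelfAdjoint B) :
    ∀ u : 𝓗, ∀ T > (0 : ℝ), ∀ ε > (0 : ℝ), ∃ N : ℕ, ∀ n ≥ N,
      ∀ t ∈ Set.Icc (0 : ℝ) T,
        ‖((NormedSpace.exp (Complex.I • ((t / n : ℝ) : ℂ) • A)).comp
              (NormedSpace.exp (Complex.I • ((t / n : ℝ) : ℂ) • B)) ^ n) u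
          - NormedSpace.exp (Complex.I • (t : ℂ) • (A + B)) u‖ ≤ ε := by
  intro u T _ ε hε
  set C := 2 * (T * (‖A‖ + ‖B‖)) ^ 2 * Real.exp (T * (‖A‖ + ‖B‖)) * ‖u‖ with hC
  obtain ⟨N, hN⟩ := exists_nat_gt (C / ε)
  refine ⟨N + 1, fun n hn t ⟨ht₀, htT⟩ => ?_⟩
  have hn₀ : (0 : ℝ) < n := by norm_cast; omega
  have htM : |t| * (‖A‖ + ‖B‖) ≤ T * (‖A‖ + ‖B‖) := by rw [abs_of_nonneg ht₀]; gcongr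
  rw [← ContinuousLinearMap.mul_def, ← sub_apply]
  calc _ ≤ _ * ‖u‖ := ContinuousLinearMap.le_opNorm _ u
    _ ≤ 2 * (|t| * (‖A‖ + ‖B‖)) ^ 2 * Real.exp (|t| * (‖A‖ + ‖B‖)) / n * ‖u‖ := by
        gcongr
        exact norm_exp_mul_exp_pow_sub_exp_add_le hA hB t (by omega)
    _ ≤ C / n := by
        rw [div_mul_eq_mul_div, hC]
        gcongr
    _ ≤ ε := by
        rw [div_le_iff₀ hn₀, ← div_le_iff₀' hε]
        exact hN.le.trans (by exact_mod_cast hn.le.trans' (Nat.le_succ N))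
end
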